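/- For every β ≥ 0 and all s, s1, s2 ∈ {−1, 1}: [1 + exp(2β·s·(s1 + s2))]^{−1} = (2/(1 + e^{4β})) · ( 1/2 + ((e^{4β} − 1)/4)·( 1{s1 ≠ s} + 1{s2 ≠ s} ) ). Consequently, the heat-bath stochastic Ising model on the cycle ℤ/nℤ with inverse temperature β, in which the spin at site x flips at rate [1 + exp(2β·σ(x)·(σ(x−1)+σ(x+1)))]^{−1}, has generator equal to θ = 2/(1+e^{4β}) times the generator of the noisy voter model on ℤ/nℤ with rates q(x,x+1) = q(x,x−1) = (e^{4β}−1)/4 (identifying spin −1 with state 0 and spin +1 with state 1). -/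

import Mathlib

open scoped BigOperators

/-- The generator of a spin system on `{0,1}^V` given flip rates `r η x`. -/
noncomputable def genOfRate {V : Type} [Fintype V] [DecidableEq V]
    (r : (V → Bool) → V → ℝ) : Matrix (V → Bool) (V → Bool) ℝ :=
  fun η ξ =>
    (∑ x, if ξ = Function.update η x (!η x) then r η x else 0)
      - (if ξ = η then ∑ x, r η x else 0)

/-- Flip rate of the noisy voter model with voting rates `q`. -/
noncomputable def voterRate {V : Type} [Fintype V] [DecidableEq V]
    (q : V → V → ℝ) (η : V → Bool) (x : V) : ℝ :=
  1 / 2 + ∑ y ∈ Finset.univ.filter (fun y => y ≠ x), q x y * (if η y ≠ η x then 1 else 0)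

/-- Generator of the noisy voter model. -/
noncomputable def voterGen {V : Type} [Fintype V] [DecidableEq V]
    (q : V → V → ℝ) : Matrix (V → Bool) (V → Bool) ℝ :=
  genOfRate (voterRate q)

/-- Transition semigroup `P^t = exp (t Q)` of the noisy voter model. -/
noncomputable def voterP {V : Type} [Fintype V] [DecidableEq V]
    (q : V → V → ℝ) (t : ℝ) : Matrix (V → Bool) (V → Bool) ℝ :=
  NormedSpace.exp (t • voterGen q)

/-- Total variation distance between two vectors on a finite set. -/
noncomputable def tvDist {Ω : Type} [Fintype Ω] (m1 m2 : Ω → ℝ) : ℝ :=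
  (1 / 2) * ∑ s, |m1 s - m2 s|

/-- `π` is a stationary distribution for the continuous-time Markov chain `(S, q)`. -/
def IsStationaryChain {V : Type} [Fintype V] [DecidableEq V]
    (q : V → V → ℝ) (π : V → ℝ) : Prop :=
  (∀ x, 0 ≤ π x) ∧ (∑ x, π x = 1) ∧
    ∀ y, ∑ x ∈ Finset.univ.filter (fun x => x ≠ y), π x * q x y
        = π y * ∑ z ∈ Finset.univ.filter (fun z => z ≠ y), q y z

/-- `μ` is a stationary distribution for the noisy voter model with rates `q`. -/
def IsStationaryNVM {V : Type} [Fintype V] [DecidableEq V]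
    (q : V → V → ℝ) (μ : (V → Bool) → ℝ) : Prop :=
  (∀ η, 0 ≤ μ η) ∧ (∑ η, μ η = 1) ∧ ∀ ξ, ∑ η, μ η * voterGen q η ξ = 0

/-- Spin value of a Boolean state: `true ↦ +1`, `false ↦ −1`. -/
noncomputable def spin (b : Bool) : ℝ := if b then 1 else -1

/-- Heat-bath flip rate of the stochastic Ising model on the cycle `ℤ/nℤ` at inverse
temperature `β`. -/
noncomputable def isingRate (n : ℕ) [NeZero n] (β : ℝ) (η : ZMod n → Bool) (x : ZMod n) : ℝ :=
  (1 + Real.exp (2 * β * spin (η x) * (spin (η (x - 1)) + spin (η (x + 1)))))⁻¹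

/-- Generator of the heat-bath stochastic Ising model on the cycle `ℤ/nℤ`. -/
noncomputable def isingGen (n : ℕ) [NeZero n] (β : ℝ) :
    Matrix (ZMod n → Bool) (ZMod n → Bool) ℝ :=
  genOfRate (isingRate n β)

/-- Nearest-neighbour voting rates `q(x, x±1) = (e^{4β} − 1)/4` on the cycle `ℤ/nℤ`. -/
noncomputable def cycleQ (n : ℕ) [NeZero n] (β : ℝ) : ZMod n → ZMod n → ℝ :=
  fun x y => if y = x + 1 ∨ y = x - 1 then (Real.exp (4 * β) - 1) / 4 else 0

/-!
Writing `E = e^{4β}`, the spin product `s (s₁ + s₂)` equals `2 - 2d`, where `d ∈ {0, 1, 2}` is the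
number of neighbours disagreeing with `s`. The heat-bath rate `(1 + E^{1-d})⁻¹` takes the values
`1/(1+E)`, `1/2`, `E/(1+E)`, which is `2/(1+E)` times the affine function `1/2 + (E-1)/4 · d`. On
the cycle, `d` is exactly the count that the noisy voter rate with `q(x, x±1) = (E-1)/4` weighs, so
the two families of flip rates, and hence the generators, differ by the factor `2/(1+E)`.
-/

lemma inv_one_add_exp_eq_of_sign (β : ℝ) {s s1 s2 : ℝ} (hs : s = -1 ∨ s = 1)
    (hs1 : s1 = -1 ∨ s1 = 1) (hs2 : s2 = -1 ∨ s2 = 1) :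
    (1 + Real.exp (2 * β * s * (s1 + s2)))⁻¹
      = (2 / (1 + Real.exp (4 * β))) *
          (1 / 2 + ((Real.exp (4 * β) - 1) / 4) *
            ((if s1 ≠ s then (1 : ℝ) else 0) + (if s2 ≠ s then (1 : ℝ) else 0))) := by
  have hE : 0 < 1 + Real.exp (4 * β) := by positivity
  rcases hs with rfl | rfl <;> rcases hs1 with rfl | rfl <;> rcases hs2 with rfl | rfl <;>
    norm_num <;> ring_nf <;> simp only [Real.exp_neg, mul_comm β 4] <;> field_simp <;> ring

lemma spin_ne_spin_iff (a b : Bool) : spin a ≠ spin b ↔ a ≠ b := by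
  cases a <;> cases b <;> norm_num [spin]

lemma spin_eq_neg_one_or_one (b : Bool) : spin b = -1 ∨ spin b = 1 := by
  cases b <;> simp [spin]

lemma genOfRate_smul {V : Type} [Fintype V] [DecidableEq V] (c : ℝ)
    (r : (V → Bool) → V → ℝ) : genOfRate (c • r) = c • genOfRate r := by
  ext η ξ
  simp only [genOfRate, Pi.smul_apply, Matrix.smul_apply, smul_eq_mul, mul_sub, Finset.mul_sum,
    mul_ite, mul_zero]

lemma ZMod.natCast_ne_zero_of_lt {n k : ℕ} (hk : 0 < k) (hkn : k < n) : (k : ZMod n) ≠ 0 := by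
  rw [Ne, ZMod.natCast_eq_zero_iff]
  exact fun h => (Nat.le_of_dvd hk h).not_gt hkn

lemma voterRate_cycleQ (n : ℕ) [NeZero n] (hn : 3 ≤ n) (β : ℝ) (η : ZMod n → Bool)
    (x : ZMod n) :
    voterRate (cycleQ n β) η x
      = 1 / 2 + (Real.exp (4 * β) - 1) / 4 *
          ((if η (x - 1) ≠ η x then (1 : ℝ) else 0) + (if η (x + 1) ≠ η x then (1 : ℝ) else 0)) := by
  have h1 : (1 : ZMod n) ≠ 0 := by exact_mod_cast ZMod.natCast_ne_zero_of_lt one_pos (by omega)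
  have h2 : (2 : ZMod n) ≠ 0 := by exact_mod_cast ZMod.natCast_ne_zero_of_lt two_pos (by omega)
  have hm : x - 1 ≠ x := fun h => h1 (by linear_combination -h)
  have hp : x + 1 ≠ x := fun h => h1 (by linear_combination h)
  have hmp : x - 1 ≠ x + 1 := fun h => h2 (by linear_combination -h)
  rw [voterRate, Finset.sum_eq_add (x - 1) (x + 1) hmp]
  · simp [cycleQ, mul_add]
  · intro y _ hy
    simp [cycleQ, hy.1, hy.2]
  · simp [hm]
  · simp [hp]

theorem stmt_13_general (β : ℝ) :
    (∀ s s1 s2 : ℝ, (s = -1 ∨ s = 1) → (s1 = -1 ∨ s1 = 1) → (s2 = -1 ∨ s2 = 1) →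
      (1 + Real.exp (2 * β * s * (s1 + s2)))⁻¹
        = (2 / (1 + Real.exp (4 * β))) *
            (1 / 2 + ((Real.exp (4 * β) - 1) / 4) *
              ((if s1 ≠ s then (1 : ℝ) else 0) + (if s2 ≠ s then (1 : ℝ) else 0))))
    ∧ ∀ n : ℕ, 3 ≤ n → ∀ _ : NeZero n,
        isingGen n β = (2 / (1 + Real.exp (4 * β))) • voterGen (cycleQ n β) := by
  refine ⟨fun s s1 s2 => inv_one_add_exp_eq_of_sign β, fun n hn _ => ?_⟩
  have hrate : isingRate n β = (2 / (1 + Real.exp (4 * β))) • voterRate (cycleQ n β) := by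
    ext η x
    rw [isingRate, Pi.smul_apply, Pi.smul_apply, smul_eq_mul, voterRate_cycleQ n hn,
      inv_one_add_exp_eq_of_sign β (spin_eq_neg_one_or_one _) (spin_eq_neg_one_or_one _)
        (spin_eq_neg_one_or_one _)]
    simp only [spin_ne_spin_iff]
  rw [isingGen, voterGen, hrate, genOfRate_smul]

/-- **The Ising/noisy-voter correspondence on the cycle (Cox–Peres–Steif).** The elementary
rate identity on `{−1,1}`, and consequently: the heat-bath stochastic Ising model on `ℤ/nℤ`
at inverse temperature `β` has generator `θ = 2/(1+e^{4β})` times the generator of the noisy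
voter model with rates `q(x,x±1) = (e^{4β}−1)/4`. -/
theorem stmt_13 (β : ℝ) (hβ : 0 ≤ β) :
    (∀ s s1 s2 : ℝ, (s = -1 ∨ s = 1) → (s1 = -1 ∨ s1 = 1) → (s2 = -1 ∨ s2 = 1) →
      (1 + Real.exp (2 * β * s * (s1 + s2)))⁻¹
        = (2 / (1 + Real.exp (4 * β))) *
            (1 / 2 + ((Real.exp (4 * β) - 1) / 4) *
              ((if s1 ≠ s then (1 : ℝ) else 0) + (if s2 ≠ s then (1 : ℝ) else 0))))
    ∧ ∀ n : ℕ, 3 ≤ n → ∀ _ : NeZero n,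
        isingGen n β = (2 / (1 + Real.exp (4 * β))) • voterGen (cycleQ n β) :=
  stmt_13_general β
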